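/- The hydrostatic-reconstruction layer-averaged kinetic scheme is kinetic well-balanced: if u_{α,i} = 0 for all α and all i, and h_i + z_{b,i} is constant in i, then the scheme preserves the data exactly, i.e. M⁺_{α,i}(ξ) = M_{α,i}(ξ) for all α, i and all ξ ∈ ℝ. -/

import Mathlib

open Finset MeasureTheory

/-- The kinetic Maxwellian `M̄(h,u,ξ) = (1/(gπ))·max(2gh − (ξ−u)², 0)^{1/2}`. -/
noncomputable def Mbar (g h u ξ : ℝ) : ℝ :=
  Real.sqrt (max (2 * g * h - (ξ - u) ^ 2) 0) / (g * Real.pi)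

/-!
At rest (`u = 0`, `h + z_b` constant) the hydrostatic reconstruction gives the same height
`h_{i+1/2-} = h_{i+1/2+}` on both sides of each interface, so the upwind density is the even
Maxwellian `l_α M̄(h_{i+1/2-}, 0, ·)` for either sign of `ξ`. The interface fluxes then cancel
exactly against the topography source terms, so the explicit step is the identity, and every
first moment `∫ ξ M_{α,i±1/2}` vanishes by oddness, so the exchange terms `G` and `N` vanish too.
Finally `h^{new}_i = ∫ M̄(h_i, 0, ·)`, which is positive as soon as `h_i > 0`; so where the
implicit step returns `0`, the cell is dry and `M_{α,i} = 0` as well.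
-/

theorem Function.Odd.integral_eq_zero {G E : Type*} [MeasurableSpace G] [AddGroup G]
    [MeasurableNeg G] [NormedAddCommGroup E] [NormedSpace ℝ E] {μ : Measure G} [μ.IsNegInvariant]
    {f : G → E} (hf : f.Odd) : ∫ x, f x ∂μ = 0 := by
  have hneg := integral_neg_eq_self f μ
  rw [funext hf, integral_neg] at hneg
  have htwice : (2 : ℝ) • ∫ x, f x ∂μ = 0 := by
    rw [two_smul]
    nth_rw 1 [← hneg]
    exact neg_add_cancel _
  exact (smul_eq_zero.1 htwice).resolve_left two_ne_zero

theorem even_Mbar (g h : ℝ) : (Mbar g h 0).Even := fun ξ => by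
  simp only [Mbar, sub_zero, neg_sq]

theorem continuous_Mbar (g h u : ℝ) : Continuous (Mbar g h u) := by
  unfold Mbar
  fun_prop

section Maxwellian

variable {g h u : ℝ}

theorem Mbar_nonneg (hg : 0 ≤ g) (ξ : ℝ) : 0 ≤ Mbar g h u ξ := by
  unfold Mbar
  have := Real.pi_pos
  positivity

theorem Mbar_eq_zero_of_nonpos (hg : 0 ≤ g) (hh : h ≤ 0) (ξ : ℝ) : Mbar g h u ξ = 0 := by
  have : 2 * g * h - (ξ - u) ^ 2 ≤ 0 := by nlinarith [sq_nonneg (ξ - u)]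
  rw [Mbar, max_eq_right this, Real.sqrt_zero, zero_div]

theorem Mbar_pos_iff (hg : 0 < g) {ξ : ℝ} : 0 < Mbar g h u ξ ↔ (ξ - u) ^ 2 < 2 * g * h := by
  rw [Mbar, div_pos_iff_of_pos_right (by positivity), Real.sqrt_pos, lt_max_iff, lt_self_iff_false,
    or_false, sub_pos]

theorem integral_Mbar_pos (hg : 0 < g) (hh : 0 < h) : 0 < ∫ ξ, Mbar g h u ξ := by
  set r := √(2 * g * h)
  have hr : 0 < r := Real.sqrt_pos.2 (by positivity)
  have hr2 : r ^ 2 = 2 * g * h := Real.sq_sqrt (by positivity)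
  have hsupp : HasCompactSupport (Mbar g h u) := by
    refine HasCompactSupport.intro (isCompact_Icc (a := u - r) (b := u + r)) fun ξ hξ => ?_
    have hfar : ¬(ξ - u) ^ 2 < 2 * g * h := by
      rw [Set.mem_Icc, not_and_or, not_le, not_le] at hξ
      rcases hξ with hξ | hξ <;> nlinarith
    exact le_antisymm (not_lt.1 (mt (Mbar_pos_iff hg).1 hfar)) (Mbar_nonneg hg.le ξ)
  have hnear : Set.Ioo (u - r) (u + r) ⊆ Function.support (Mbar g h u) := fun ξ hξ =>
    ((Mbar_pos_iff hg).2 (hr2 ▸ sq_lt_sq' (by linarith [hξ.1]) (by linarith [hξ.2]))).ne'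
  rw [integral_pos_iff_support_of_nonneg (Mbar_nonneg hg.le)
    ((continuous_Mbar g h u).integrable_of_hasCompactSupport hsupp)]
  calc (0 : ENNReal) < volume (Set.Ioo (u - r) (u + r)) := by
        rw [Real.volume_Ioo, ENNReal.ofReal_pos]
        linarith
    _ ≤ volume (Function.support (Mbar g h u)) := measure_mono hnear

end Maxwellian

/-- Index convention: `Mm α i = M_{α,i+1/2−}`, `Mp α i = M_{α,i+1/2+}`,
`δp α i = δM_{α,i+1/2−}`, `δm α i = δM_{α,i−1/2+}`, and the index `α` of `G`, `Nk`
stands for the interface `α+1/2`. -/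
theorem topography_scheme_well_balanced_general
    (g : ℝ) (hg : 0 < g)
    (N : ℕ)
    (l : ℕ → ℝ) (hlsum : ∑ α ∈ Icc 1 N, l α = 1)
    (Δt : ℝ)
    (Δx : ℤ → ℝ) (hΔx : ∀ i, 0 < Δx i)
    (σ : ℤ → ℝ)
    (zb : ℤ → ℝ)
    (h : ℤ → ℝ)
    (u : ℕ → ℤ → ℝ)
    (zhalf : ℤ → ℝ)
    (hm : ℤ → ℝ) (hhm : ∀ i : ℤ, hm i = max (h i + zb i - zhalf i) 0)
    (hp : ℤ → ℝ) (hhp : ∀ i : ℤ, hp i = max (h (i + 1) + zb (i + 1) - zhalf i) 0)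
    (M : ℕ → ℤ → ℝ → ℝ)
    (hM : ∀ (α : ℕ) (i : ℤ) (ξ : ℝ), M α i ξ = l α * Mbar g (h i) (u α i) ξ)
    (Mm : ℕ → ℤ → ℝ → ℝ)
    (hMm : ∀ (α : ℕ) (i : ℤ) (ξ : ℝ), Mm α i ξ = l α * Mbar g (hm i) (u α i) ξ)
    (Mp : ℕ → ℤ → ℝ → ℝ)
    (hMp : ∀ (α : ℕ) (i : ℤ) (ξ : ℝ), Mp α i ξ = l α * Mbar g (hp i) (u α (i + 1)) ξ)
    (Mhalf : ℕ → ℤ → ℝ → ℝ)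
    (hMhalf : ∀ (α : ℕ) (i : ℤ) (ξ : ℝ),
      Mhalf α i ξ = if 0 < ξ then Mm α i ξ else Mp α i ξ)
    (δp : ℕ → ℤ → ℝ → ℝ)
    (hδp : ∀ (α : ℕ) (i : ℤ) (ξ : ℝ),
      δp α i ξ = (ξ - u α i) * (M α i ξ - Mm α i ξ))
    (δm : ℕ → ℤ → ℝ → ℝ)
    (hδm : ∀ (α : ℕ) (i : ℤ) (ξ : ℝ),
      δm α i ξ = (ξ - u α i) * (M α i ξ - Mp α (i - 1) ξ))
    (Mstar : ℕ → ℤ → ℝ → ℝ)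
    (hMstar : ∀ (α : ℕ) (i : ℤ) (ξ : ℝ),
      Mstar α i ξ = M α i ξ
        - σ i * (ξ * Mhalf α i ξ + δp α i ξ - ξ * Mhalf α (i - 1) ξ - δm α i ξ))
    (hnew : ℤ → ℝ)
    (hhnew : ∀ i : ℤ, hnew i = ∑ α ∈ Icc 1 N, ∫ ξ : ℝ, Mstar α i ξ)
    (G : ℕ → ℤ → ℝ)
    (hG : ∀ α ∈ Icc 1 (N - 1), ∀ i : ℤ,
      Δx i * G α i =
        ∑ j ∈ Icc 1 α,
          ((∫ ξ : ℝ, ξ * (Mhalf j i ξ - Mhalf j (i - 1) ξ))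
            - l j * ∑ p ∈ Icc 1 N, ∫ ξ : ℝ, ξ * (Mhalf p i ξ - Mhalf p (i - 1) ξ)))
    (Mplus Nk : ℕ → ℤ → ℝ → ℝ)
    (hNk0 : ∀ i ξ, Nk 0 i ξ = 0) (hNkN : ∀ i ξ, Nk N i ξ = 0)
    (hNk : ∀ α ∈ Icc 1 (N - 1), ∀ (i : ℤ) (ξ : ℝ),
      Nk α i ξ = G α i / hnew i *
        (if G α i ≤ 0 then Mplus α i ξ / l α else Mplus (α + 1) i ξ / l (α + 1)))
    (hMplus : ∀ α ∈ Icc 1 N, ∀ (i : ℤ) (ξ : ℝ),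
      Mplus α i ξ =
        if 0 < hnew i then Mstar α i ξ + Δt * (Nk α i ξ - Nk (α - 1) i ξ) else 0)
    (hu0 : ∀ α ∈ Icc 1 N, ∀ i : ℤ, u α i = 0)
    (hlake : ∀ i : ℤ, h i + zb i = h 0 + zb 0) :
    ∀ α ∈ Icc 1 N, ∀ (i : ℤ) (ξ : ℝ), Mplus α i ξ = M α i ξ := by
  have hrec : ∀ i, hp i = hm i := fun i => by rw [hhp, hhm, hlake (i + 1), hlake i]
  have hhalf : ∀ α ∈ Icc 1 N, ∀ i ξ, Mhalf α i ξ = l α * Mbar g (hm i) 0 ξ := by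
    intro α hα i ξ
    rw [hMhalf, hMm, hMp, hrec, hu0 α hα, hu0 α hα, ite_self]
  have hstar : ∀ α ∈ Icc 1 N, ∀ i ξ, Mstar α i ξ = M α i ξ := by
    intro α hα i ξ
    rw [hMstar, hδp, hδm, hhalf α hα, hhalf α hα, hMm, hMp, hrec, sub_add_cancel, hu0 α hα]
    ring
  have hflux : ∀ j ∈ Icc 1 N, ∀ i, ∫ ξ, ξ * (Mhalf j i ξ - Mhalf j (i - 1) ξ) = 0 := by
    intro j hj i
    refine Function.Odd.integral_eq_zero fun ξ => ?_
    simp only [hhalf j hj, even_Mbar _ _ ξ]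
    ring
  have hGzero : ∀ α ∈ Icc 1 (N - 1), ∀ i, G α i = 0 := by
    intro α hα i
    have hαN : Icc 1 α ⊆ Icc 1 N := Icc_subset_Icc_right ((mem_Icc.1 hα).2.trans (N.sub_le 1))
    have hsum := hG α hα i
    rw [sum_eq_zero fun p hp => hflux p hp i,
      sum_eq_zero fun j hj => by rw [hflux j (hαN hj) i, mul_zero, sub_zero]] at hsum
    exact (mul_eq_zero.1 hsum).resolve_left (hΔx i).ne'
  have hNkzero : ∀ α ≤ N, ∀ i ξ, Nk α i ξ = 0 := by
    intro α hα i ξ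
    rcases Nat.eq_zero_or_pos α with rfl | hpos
    · exact hNk0 i ξ
    rcases hα.eq_or_lt with rfl | hlt
    · exact hNkN i ξ
    have hα' : α ∈ Icc 1 (N - 1) := mem_Icc.2 ⟨hpos, by omega⟩
    rw [hNk α hα', hGzero α hα', zero_div, zero_mul]
  have hnew_eq : ∀ i, hnew i = ∫ ξ, Mbar g (h i) 0 ξ := by
    intro i
    rw [hhnew, ← one_mul (∫ ξ, Mbar g (h i) 0 ξ), ← hlsum, sum_mul]
    refine sum_congr rfl fun α hα => ?_
    simp only [hstar α hα, hM, hu0 α hα]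
    exact integral_const_mul _ _
  intro α hα i ξ
  have hαN := (mem_Icc.1 hα).2
  rw [hMplus α hα, hnew_eq]
  split_ifs with hwet
  · rw [hNkzero α hαN, hNkzero (α - 1) (by omega), hstar α hα]
    ring
  · have hdry : h i ≤ 0 := not_lt.1 (mt (integral_Mbar_pos hg) hwet)
    rw [hM, Mbar_eq_zero_of_nonpos hg.le hdry, mul_zero]

/-- Kinetic well-balancing of the hydrostatic-reconstruction layer-averaged kinetic
scheme with topography: if `u_{α,i} = 0` for all layers `α` and all cells `i`, and the
free surface `h_i + z_{b,i}` is constant in `i` (lake at rest), then the scheme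
preserves the data exactly: `M⁺_{α,i}(ξ) = M_{α,i}(ξ)` for all `α`, `i` and `ξ`.
Interface index convention: `Mm α i = M_{α,i+1/2−}`, `Mp α i = M_{α,i+1/2+}`,
`δp α i = δM_{α,i+1/2−}`, `δm α i = δM_{α,i−1/2+}`, and the index `α` of `G`, `Nk`
stands for the interface `α+1/2`. -/
theorem topography_scheme_well_balanced
    (g : ℝ) (hg : 0 < g)
    (N : ℕ) (hN : 1 ≤ N)
    (l : ℕ → ℝ) (hl : ∀ α ∈ Icc 1 N, 0 < l α) (hlsum : ∑ α ∈ Icc 1 N, l α = 1)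
    (Δt : ℝ) (hΔt : 0 < Δt)
    (Δx : ℤ → ℝ) (hΔx : ∀ i, 0 < Δx i)
    (σ : ℤ → ℝ) (hσ : ∀ i, σ i = Δt / Δx i)
    (zb : ℤ → ℝ)
    (h : ℤ → ℝ) (hh : ∀ i, 0 ≤ h i)
    (u : ℕ → ℤ → ℝ)
    (zhalf : ℤ → ℝ) (hzhalf : ∀ i : ℤ, zhalf i = max (zb i) (zb (i + 1)))
    (hm : ℤ → ℝ) (hhm : ∀ i : ℤ, hm i = max (h i + zb i - zhalf i) 0)
    (hp : ℤ → ℝ) (hhp : ∀ i : ℤ, hp i = max (h (i + 1) + zb (i + 1) - zhalf i) 0)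
    (M : ℕ → ℤ → ℝ → ℝ)
    (hM : ∀ (α : ℕ) (i : ℤ) (ξ : ℝ), M α i ξ = l α * Mbar g (h i) (u α i) ξ)
    (Mm : ℕ → ℤ → ℝ → ℝ)
    (hMm : ∀ (α : ℕ) (i : ℤ) (ξ : ℝ), Mm α i ξ = l α * Mbar g (hm i) (u α i) ξ)
    (Mp : ℕ → ℤ → ℝ → ℝ)
    (hMp : ∀ (α : ℕ) (i : ℤ) (ξ : ℝ), Mp α i ξ = l α * Mbar g (hp i) (u α (i + 1)) ξ)
    (Mhalf : ℕ → ℤ → ℝ → ℝ)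
    (hMhalf : ∀ (α : ℕ) (i : ℤ) (ξ : ℝ),
      Mhalf α i ξ = if 0 < ξ then Mm α i ξ else Mp α i ξ)
    (δp : ℕ → ℤ → ℝ → ℝ)
    (hδp : ∀ (α : ℕ) (i : ℤ) (ξ : ℝ),
      δp α i ξ = (ξ - u α i) * (M α i ξ - Mm α i ξ))
    (δm : ℕ → ℤ → ℝ → ℝ)
    (hδm : ∀ (α : ℕ) (i : ℤ) (ξ : ℝ),
      δm α i ξ = (ξ - u α i) * (M α i ξ - Mp α (i - 1) ξ))
    (Mstar : ℕ → ℤ → ℝ → ℝ)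
    (hMstar : ∀ (α : ℕ) (i : ℤ) (ξ : ℝ),
      Mstar α i ξ = M α i ξ
        - σ i * (ξ * Mhalf α i ξ + δp α i ξ - ξ * Mhalf α (i - 1) ξ - δm α i ξ))
    (hnew : ℤ → ℝ)
    (hhnew : ∀ i : ℤ, hnew i = ∑ α ∈ Icc 1 N, ∫ ξ : ℝ, Mstar α i ξ)
    (G : ℕ → ℤ → ℝ)
    (hG0 : ∀ i, G 0 i = 0) (hGN : ∀ i, G N i = 0)
    (hG : ∀ α ∈ Icc 1 (N - 1), ∀ i : ℤ,
      Δx i * G α i =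
        ∑ j ∈ Icc 1 α,
          ((∫ ξ : ℝ, ξ * (Mhalf j i ξ - Mhalf j (i - 1) ξ))
            - l j * ∑ p ∈ Icc 1 N, ∫ ξ : ℝ, ξ * (Mhalf p i ξ - Mhalf p (i - 1) ξ)))
    (Mplus Nk : ℕ → ℤ → ℝ → ℝ)
    (hNk0 : ∀ i ξ, Nk 0 i ξ = 0) (hNkN : ∀ i ξ, Nk N i ξ = 0)
    (hNk : ∀ α ∈ Icc 1 (N - 1), ∀ (i : ℤ) (ξ : ℝ),
      Nk α i ξ = G α i / hnew i *
        (if G α i ≤ 0 then Mplus α i ξ / l α else Mplus (α + 1) i ξ / l (α + 1)))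
    (hMplus : ∀ α ∈ Icc 1 N, ∀ (i : ℤ) (ξ : ℝ),
      Mplus α i ξ =
        if 0 < hnew i then Mstar α i ξ + Δt * (Nk α i ξ - Nk (α - 1) i ξ) else 0)
    (hu0 : ∀ α ∈ Icc 1 N, ∀ i : ℤ, u α i = 0)
    (hlake : ∀ i : ℤ, h i + zb i = h 0 + zb 0) :
    ∀ α ∈ Icc 1 N, ∀ (i : ℤ) (ξ : ℝ), Mplus α i ξ = M α i ξ :=
  topography_scheme_well_balanced_general g hg N l hlsum Δt Δx hΔx σ zb h u zhalf hm hhm hp hhp M hM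
    Mm hMm Mp hMp Mhalf hMhalf δp hδp δm hδm Mstar hMstar hnew hhnew G hG Mplus Nk hNk0 hNkN hNk
    hMplus hu0 hlake
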